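/- arXiv:2510.14710 — 2 statements merged into one kernel-verified Lean document; each statement's English description precedes it below -/
import Mathlib

section
/- For r ∈ [s,t], the number of connected components of the union graph G^{s,t} equals |θ(r)| if and only if θ(r) is the maximum of the subposet {θ(r') : r' ∈ [s,t]} under the refinement order. -/
open scoped Classical

/-- A partition of a type `X` into nonempty clusters, represented as a finite
set of finite clusters such that every element lies in exactly one cluster. -/
structure Partn (X : Type*) where
  parts : Finset (Finset X)
  nonempty : ∀ C ∈ parts, C.Nonempty
  existsUnique : ∀ x : X, ∃! C, C ∈ parts ∧ x ∈ C

namespace Partn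

variable {X : Type*}

/-- `x` and `y` lie in a common cluster of `π`. -/
def rel (π : Partn X) (x y : X) : Prop := ∃ C ∈ π.parts, x ∈ C ∧ y ∈ C

/-- Refinement order: every cluster of `π` is contained in a cluster of `π'`. -/
def le (π π' : Partn X) : Prop := ∀ C ∈ π.parts, ∃ C' ∈ π'.parts, C ⊆ C'

end Partn

/-!
The clusters of `θ r` are the classes of an equivalence relation contained in the equivalence
closure `S` of the union relation, so the components of `G^{s,t}` form a quotient of the clusters
of `θ r`. On a finite set two nested equivalence relations have equally many classes only if they
coincide, and `S` is contained in the relation of `θ r` exactly when every `θ r'` refines `θ r`.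
-/

namespace Setoid

variable {α : Type*}

theorem map_of_le_surjective {r s : Setoid α} (h : r ≤ s) : Function.Surjective (map_of_le h) :=
  Quotient.ind fun x => ⟨⟦x⟧, rfl⟩

theorem card_quotient_eq_iff_le [Finite α] {r s : Setoid α} (h : r ≤ s) :
    Nat.card (Quotient s) = Nat.card (Quotient r) ↔ s ≤ r := by
  constructor
  · intro hcard x y hxy
    have hinj := ((Nat.bijective_iff_surjective_and_card (map_of_le h)).2
      ⟨map_of_le_surjective h, hcard.symm⟩).1
    exact Quotient.exact (hinj (Quotient.sound hxy : (⟦x⟧ : Quotient s) = ⟦y⟧))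
  · intro h'
    rw [le_antisymm h h']

end Setoid

namespace Partn

variable {X : Type*} (π : Partn X)

noncomputable def cluster (x : X) : π.parts :=
  ⟨(π.existsUnique x).choose, (π.existsUnique x).choose_spec.1.1⟩

theorem mem_cluster (x : X) : x ∈ (π.cluster x : Finset X) :=
  (π.existsUnique x).choose_spec.1.2

theorem cluster_eq_of_mem {C : Finset X} {x : X} (hC : C ∈ π.parts) (hx : x ∈ C) :
    (π.cluster x : Finset X) = C :=
  ((π.existsUnique x).choose_spec.2 C ⟨hC, hx⟩).symm

theorem rel_iff_cluster_eq {x y : X} : π.rel x y ↔ π.cluster x = π.cluster y := by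
  constructor
  · rintro ⟨C, hC, hx, hy⟩
    exact Subtype.ext ((π.cluster_eq_of_mem hC hx).trans (π.cluster_eq_of_mem hC hy).symm)
  · intro h
    exact ⟨π.cluster x, (π.cluster x).2, π.mem_cluster x, h ▸ π.mem_cluster y⟩

theorem cluster_surjective : Function.Surjective π.cluster := by
  rintro ⟨C, hC⟩
  obtain ⟨x, hx⟩ := π.nonempty C hC
  exact ⟨x, Subtype.ext (π.cluster_eq_of_mem hC hx)⟩

noncomputable def setoid : Setoid X := Setoid.ker π.cluster

theorem setoid_iff {x y : X} : π.setoid x y ↔ π.rel x y :=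
  π.rel_iff_cluster_eq.symm

theorem card_quotient_setoid : Nat.card (Quotient π.setoid) = π.parts.card :=
  (Nat.card_congr (Setoid.quotientKerEquivOfSurjective _ π.cluster_surjective)).trans
    (by simp)

theorem le_iff_rel_imp {π π' : Partn X} : le π π' ↔ ∀ x y, π.rel x y → π'.rel x y := by
  constructor
  · rintro h x y ⟨C, hC, hx, hy⟩
    obtain ⟨C', hC', hCC'⟩ := h C hC
    exact ⟨C', hC', hCC' hx, hCC' hy⟩
  · intro h C hC
    obtain ⟨x, hx⟩ := π.nonempty C hC
    refine ⟨π'.cluster x, (π'.cluster x).2, fun y hy => ?_⟩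
    exact π'.rel_iff_cluster_eq.1 (h x y ⟨C, hC, hx, hy⟩) ▸ π'.mem_cluster y

end Partn

/-- the number of connected components of the union graph equals
|θ(r)| iff θ(r) is the maximum of the subposet under refinement. -/
theorem numComponents_eq_card_iff_maximum
    {X ι : Type*} [Fintype X] [LinearOrder ι]
    (θ : ι → Partn X) (s t : ι) (r : ι) (hr : r ∈ Set.Icc s t) :
    Nat.card (Quotient (Relation.EqvGen.setoid
        (fun x y : X => ∃ q ∈ Set.Icc s t, (θ q).rel x y))) =
      (θ r).parts.card ↔
    ∀ r' ∈ Set.Icc s t, Partn.le (θ r') (θ r) := by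
  set R := fun x y : X => ∃ q ∈ Set.Icc s t, (θ q).rel x y
  have hle : (θ r).setoid ≤ Relation.EqvGen.setoid R := fun x y hxy =>
    Relation.EqvGen.rel x y ⟨r, hr, (θ r).setoid_iff.1 hxy⟩
  rw [← (θ r).card_quotient_setoid, Setoid.card_quotient_eq_iff_le hle,
    Setoid.gi.gc.le_iff_le]
  simp only [R, Pi.le_def, Partn.le_iff_rel_imp, Partn.setoid_iff]
  exact ⟨fun h q hq x y hxy => h x y ⟨q, hq, hxy⟩, fun h x y ⟨q, hq, hxy⟩ => h q hq x y hxy⟩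
end

section
/- For two partitions θ(t_m), θ(t_{m+1}) of a finite set X, there is a triangle 0-conflict in {t_m, t_{m+1}} if and only if the bipartite cluster-overlap graph (clusters as vertices, edges for nonempty intersections) contains a path with at least 3 edges. -/
open scoped Classical

/-- Bipartite overlap relation between clusters of two partitions: a cluster of
π (on the left) is related to a cluster of π' (on the right) iff they
intersect. -/
def overlapRel {X : Type*} (π π' : Partn X) :
    (Finset X ⊕ Finset X) → (Finset X ⊕ Finset X) → Prop
  | Sum.inl C, Sum.inr C' =>
      C ∈ π.parts ∧ C' ∈ π'.parts ∧ (C ∩ C').Nonempty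
  | _, _ => False

/-- The bipartite cluster-overlap graph of two partitions. -/
def overlapGraph {X : Type*} (π π' : Partn X) :
    SimpleGraph (Finset X ⊕ Finset X) :=
  SimpleGraph.fromRel (overlapRel π π')

/-! A triangle 0-conflict between two partitions `π`, `π'` is, up to reversing the triple, a
triple with `x ~ y` in `π` but not in `π'` and `y ~ z` in `π'` but not in `π`. The `π'`-cluster
of `x`, the `π`-cluster of `x, y`, the `π'`-cluster of `y, z` and the `π`-cluster of `z` then
form a path with three edges in the overlap graph; conversely, points picked in the three
consecutive intersections along such a path form a conflict, because clusters are disjoint. -/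

namespace Partn

variable {X : Type*} (π : Partn X)

theorem eq_of_mem {C D : Finset X} {x : X} (hC : C ∈ π.parts) (hD : D ∈ π.parts)
    (hxC : x ∈ C) (hxD : x ∈ D) : C = D :=
  (π.existsUnique x).unique ⟨hC, hxC⟩ ⟨hD, hxD⟩

theorem exists_mem (x : X) : ∃ C ∈ π.parts, x ∈ C :=
  let ⟨C, hC, _⟩ := π.existsUnique x
  ⟨C, hC⟩

theorem rel_refl (x : X) : π.rel x x :=
  let ⟨C, hC, hx⟩ := π.exists_mem x
  ⟨C, hC, hx, hx⟩

theorem rel_symm {x y : X} : π.rel x y → π.rel y x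
  | ⟨C, hC, hx, hy⟩ => ⟨C, hC, hy, hx⟩

theorem rel_iff_of_mem {C : Finset X} {x y : X} (hC : C ∈ π.parts) (hx : x ∈ C) :
    π.rel x y ↔ y ∈ C :=
  ⟨fun ⟨_, hD, hxD, hyD⟩ => π.eq_of_mem hD hC hxD hx ▸ hyD, fun hy => ⟨C, hC, hx, hy⟩⟩

def IsAlternating (π π' : Partn X) (x y z : X) : Prop :=
  π.rel x y ∧ ¬ π'.rel x y ∧ π'.rel y z ∧ ¬ π.rel y z

end Partn

open Partn

def HasTriangleConflict {X : Type*} (S : Set (Partn X)) : Prop :=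
  ∃ x y z : X, x ≠ y ∧ x ≠ z ∧ y ≠ z ∧
    (∃ ρ₁ ∈ S, ρ₁.rel x y) ∧ (∃ ρ₂ ∈ S, ρ₂.rel y z) ∧
    ¬ ∃ ρ ∈ S, ρ.rel x y ∧ ρ.rel y z

theorem hasTriangleConflict_pair_iff {X : Type*} (π π' : Partn X) :
    HasTriangleConflict {π, π'} ↔ ∃ x y z, IsAlternating π π' x y z := by
  constructor
  · rintro ⟨x, y, z, -, -, -, ⟨ρ₁, hρ₁, hxy⟩, ⟨ρ₂, hρ₂, hyz⟩, hno⟩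
    simp only [Set.mem_insert_iff, Set.mem_singleton_iff, exists_eq_or_imp, exists_eq_left,
      not_or, not_and] at hρ₁ hρ₂ hno
    obtain ⟨hno, hno'⟩ := hno
    rcases hρ₁ with h₁ | h₁ <;> rcases hρ₂ with h₂ | h₂ <;> subst ρ₁ ρ₂
    · exact absurd hyz (hno hxy)
    · exact ⟨x, y, z, hxy, fun h => hno' h hyz, hyz, hno hxy⟩
    -- reading `x ~' y ~ z` backwards gives `z ~ y ~' x`
    · exact ⟨z, y, x, π.rel_symm hyz, fun h => hno' hxy (π'.rel_symm h), π'.rel_symm hxy,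
        fun h => hno (π.rel_symm h) hyz⟩
    · exact absurd hyz (hno' hxy)
  · rintro ⟨x, y, z, hxy, hxy', hyz', hyz⟩
    refine ⟨x, y, z, ?_, ?_, ?_, ⟨π, by simp, hxy⟩, ⟨π', by simp, hyz'⟩, ?_⟩
    · rintro rfl; exact hxy' (π'.rel_refl x)
    · rintro rfl; exact hyz (π.rel_symm hxy)
    · rintro rfl; exact hyz (π.rel_refl y)
    · rintro ⟨ρ, hρ, hρxy, hρyz⟩
      rcases hρ with rfl | rfl
      exacts [hyz hρyz, hxy' hρxy]

theorem SimpleGraph.exists_isPath_three_le_length_iff {V : Type*} (G : SimpleGraph V) :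
    (∃ (u v : V) (p : G.Walk u v), p.IsPath ∧ 3 ≤ p.length) ↔
      ∃ a b c d, G.Adj a b ∧ G.Adj b c ∧ G.Adj c d ∧ a ≠ c ∧ a ≠ d ∧ b ≠ d := by
  constructor
  · rintro ⟨u, v, p, hp, hl⟩
    rcases p with _ | ⟨hab, _ | ⟨hbc, _ | ⟨hcd, p⟩⟩⟩
    · simp at hl
    · simp at hl
    · simp at hl
    · have hnd := hp.support_nodup
      simp only [SimpleGraph.Walk.support_cons, List.nodup_cons, List.mem_cons, not_or] at hnd
      exact ⟨_, _, _, _, hab, hbc, hcd, hnd.1.2.1, fun h => hnd.1.2.2 (h ▸ p.start_mem_support),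
        fun h => hnd.2.1.2 (h ▸ p.start_mem_support)⟩
  · rintro ⟨a, b, c, d, hab, hbc, hcd, hac, had, hbd⟩
    refine ⟨a, d, .cons hab (.cons hbc (.cons hcd .nil)), ?_, le_rfl⟩
    simp [SimpleGraph.Walk.isPath_def, hab.ne, hbc.ne, hcd.ne, hac, had, hbd]

section overlapGraph

variable {X : Type*} {π π' : Partn X} {C C' : Finset X}

@[simp]
theorem overlapGraph_adj_inl_inr :
    (overlapGraph π π').Adj (.inl C) (.inr C') ↔
      C ∈ π.parts ∧ C' ∈ π'.parts ∧ (C ∩ C').Nonempty := by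
  simp [overlapGraph, overlapRel]

@[simp]
theorem overlapGraph_adj_inr_inl :
    (overlapGraph π π').Adj (.inr C') (.inl C) ↔
      C ∈ π.parts ∧ C' ∈ π'.parts ∧ (C ∩ C').Nonempty := by
  rw [SimpleGraph.adj_comm, overlapGraph_adj_inl_inr]

@[simp]
theorem overlapGraph_not_adj_inl_inl : ¬ (overlapGraph π π').Adj (.inl C) (.inl C') := by
  simp [overlapGraph, overlapRel]

@[simp]
theorem overlapGraph_not_adj_inr_inr : ¬ (overlapGraph π π').Adj (.inr C) (.inr C') := by
  simp [overlapGraph, overlapRel]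

theorem overlapGraph_exists_three_edge_path_iff :
    (∃ a b c d, (overlapGraph π π').Adj a b ∧ (overlapGraph π π').Adj b c ∧
        (overlapGraph π π').Adj c d ∧ a ≠ c ∧ a ≠ d ∧ b ≠ d) ↔
      ∃ A' C D' B, (overlapGraph π π').Adj (.inr A') (.inl C) ∧
        (overlapGraph π π').Adj (.inl C) (.inr D') ∧
        (overlapGraph π π').Adj (.inr D') (.inl B) ∧ A' ≠ D' ∧ C ≠ B := by
  constructor
  · rintro ⟨a, b, c, d, hab, hbc, hcd, hac, -, hbd⟩
    rcases a with A | A' <;> rcases b with B | B' <;> rcases c with C | C' <;>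
      rcases d with D | D' <;> simp -failIfUnchanged only [overlapGraph_not_adj_inl_inl,
        overlapGraph_not_adj_inr_inr] at hab hbc hcd
    -- a path starting with a cluster of `π` is reversed
    · exact ⟨D', C, B', A, hcd.symm, hbc.symm, hab.symm, fun h => hbd (by rw [h]),
        fun h => hac (by rw [h])⟩
    · exact ⟨A', B, C', D, hab, hbc, hcd, fun h => hac (by rw [h]), fun h => hbd (by rw [h])⟩
  · rintro ⟨A', C, D', B, h₁, h₂, h₃, hAD, hCB⟩
    exact ⟨_, _, _, _, h₁, h₂, h₃, by simpa using hAD, by simp, by simpa using hCB⟩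

theorem exists_isAlternating_iff :
    (∃ x y z, IsAlternating π π' x y z) ↔
      ∃ A' C D' B, (overlapGraph π π').Adj (.inr A') (.inl C) ∧
        (overlapGraph π π').Adj (.inl C) (.inr D') ∧
        (overlapGraph π π').Adj (.inr D') (.inl B) ∧ A' ≠ D' ∧ C ≠ B := by
  simp only [overlapGraph_adj_inl_inr, overlapGraph_adj_inr_inl]
  constructor
  · rintro ⟨x, y, z, ⟨C, hC, hxC, hyC⟩, hxy', ⟨D', hD', hyD', hzD'⟩, hyz⟩
    obtain ⟨A', hA', hxA'⟩ := π'.exists_mem x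
    obtain ⟨B, hB, hzB⟩ := π.exists_mem z
    refine ⟨A', C, D', B, ⟨hC, hA', x, by simp [hxC, hxA']⟩, ⟨hC, hD', y, by simp [hyC, hyD']⟩,
      ⟨hB, hD', z, by simp [hzB, hzD']⟩, ?_, ?_⟩
    · rintro rfl; exact hxy' ⟨A', hA', hxA', hyD'⟩
    · rintro rfl; exact hyz ⟨C, hC, hyC, hzB⟩
  · rintro ⟨A', C, D', B, ⟨hC, hA', x, hx⟩, ⟨-, hD', y, hy⟩, ⟨hB, -, z, hz⟩, hAD, hCB⟩
    rw [Finset.mem_inter] at hx hy hz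
    refine ⟨x, y, z, ⟨C, hC, hx.1, hy.1⟩, ?_, ⟨D', hD', hy.2, hz.2⟩, ?_⟩
    · rw [π'.rel_iff_of_mem hA' hx.2]
      exact fun hyA' => hAD (π'.eq_of_mem hA' hD' hyA' hy.2)
    · rw [π.rel_iff_of_mem hC hy.1]
      exact fun hzC => hCB (π.eq_of_mem hC hB hzC hz.1)

end overlapGraph

theorem triangle_zero_conflict_iff_path_length_three_general
    {X : Type*} (π π' : Partn X) :
    (∃ x y z : X, x ≠ y ∧ x ≠ z ∧ y ≠ z ∧
      (∃ ρ₁ ∈ ({π, π'} : Set (Partn X)), ρ₁.rel x y) ∧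
      (∃ ρ₂ ∈ ({π, π'} : Set (Partn X)), ρ₂.rel y z) ∧
      ¬ ∃ ρ ∈ ({π, π'} : Set (Partn X)), ρ.rel x y ∧ ρ.rel y z) ↔
    (∃ (u v : Finset X ⊕ Finset X) (p : (overlapGraph π π').Walk u v),
      p.IsPath ∧ 3 ≤ p.length) :=
  (hasTriangleConflict_pair_iff π π').trans <|
    exists_isAlternating_iff.trans <|
      overlapGraph_exists_three_edge_path_iff.symm.trans
        (overlapGraph π π').exists_isPath_three_le_length_iff.symm

/-- two partitions have a triangle 0-conflict iff the bipartite
cluster-overlap graph contains a path with at least 3 edges. -/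
theorem triangle_zero_conflict_iff_path_length_three
    {X : Type*} [DecidableEq X] (π π' : Partn X) :
    (∃ x y z : X, x ≠ y ∧ x ≠ z ∧ y ≠ z ∧
      (∃ ρ₁ ∈ ({π, π'} : Set (Partn X)), ρ₁.rel x y) ∧
      (∃ ρ₂ ∈ ({π, π'} : Set (Partn X)), ρ₂.rel y z) ∧
      ¬ ∃ ρ ∈ ({π, π'} : Set (Partn X)), ρ.rel x y ∧ ρ.rel y z) ↔
    (∃ (u v : Finset X ⊕ Finset X) (p : (overlapGraph π π').Walk u v),
      p.IsPath ∧ 3 ≤ p.length) :=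
  triangle_zero_conflict_iff_path_length_three_general π π'
end
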